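/- arXiv:1501.04585 — 5 statements merged into one kernel-verified Lean document; each statement's English description precedes it below -/
import Mathlib

section
/- For any three functions f, g, h from the natural numbers to the closed complex unit disc and any real x ≥ 2, the pretentious distance satisfies the triangle inequality: D(f, h; x) ≤ D(f, g; x) + D(g, h; x), where D(f, g; x)² = ∑_{p ≤ x, p prime} (1 - Re(f(p) · conj(g(p))))/p. -/
/-!
For `x, y` in the closed unit ball of a real inner product space, `√(1 - ⟪x, y⟫)` satisfies
the triangle inequality: expanding gives
`1 - ⟪x, z⟫ = (1 - ⟪x, y⟫) + (1 - ⟪y, z⟫) - (1 - ‖y‖²) + ⟪x - y, y - z⟫`,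
and Cauchy–Schwarz together with `‖x - y‖² ≤ 2 (1 - ⟪x, y⟫)` bounds the right-hand side by
`(√(1 - ⟪x, y⟫) + √(1 - ⟪y, z⟫))²`. On `ℂ`, `Re (z * conj w) = ⟪w, z⟫_ℝ`, so this holds prime by
prime, and Minkowski's inequality for the weighted sum over primes gives the triangle inequality
for `D`.
-/

open Finset

/-- The Granville–Soundararajan pretentious distance `D(f, g; x)`:
the nonnegative square root of `∑_{p ≤ x, p prime} (1 - Re(f(p)·conj(g(p))))/p`. -/
noncomputable def pretentiousDist (f g : ℕ → ℂ) (x : ℝ) : ℝ :=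
  Real.sqrt (∑ p ∈ (Finset.range (⌊x⌋₊ + 1)).filter Nat.Prime,
    (1 - (f p * (starRingEnd ℂ) (g p)).re) / p)

theorem sqrt_sum_le_sqrt_sum_add_sqrt_sum {ι : Type*} (s : Finset ι) {a b c : ι → ℝ}
    (ha : ∀ i, 0 ≤ a i) (hb : ∀ i, 0 ≤ b i) (h : ∀ i ∈ s, √(c i) ≤ √(a i) + √(b i)) :
    √(∑ i ∈ s, c i) ≤ √(∑ i ∈ s, a i) + √(∑ i ∈ s, b i) := by
  have hc : ∀ i ∈ s, c i ≤ a i + b i + 2 * (√(a i) * √(b i)) := fun i hi ↦ by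
    have := (Real.sqrt_le_left (by positivity)).1 (h i hi)
    rwa [add_sq, Real.sq_sqrt (ha i), Real.sq_sqrt (hb i), add_right_comm, mul_assoc] at this
  rw [Real.sqrt_le_left (by positivity), add_sq, Real.sq_sqrt (sum_nonneg fun i _ ↦ ha i),
    Real.sq_sqrt (sum_nonneg fun i _ ↦ hb i), add_right_comm, mul_assoc]
  calc ∑ i ∈ s, c i
      ≤ ∑ i ∈ s, (a i + b i + 2 * (√(a i) * √(b i))) := sum_le_sum hc
    _ = ∑ i ∈ s, a i + ∑ i ∈ s, b i + 2 * ∑ i ∈ s, √(a i) * √(b i) := by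
      rw [sum_add_distrib, sum_add_distrib, mul_sum]
    _ ≤ _ := by gcongr; exact Real.sum_sqrt_mul_sqrt_le s ha hb

section InnerProductSpace

variable {E : Type*} [NormedAddCommGroup E] [InnerProductSpace ℝ E] {x y z : E}

open scoped RealInnerProductSpace

theorem one_sub_real_inner_nonneg (hx : ‖x‖ ≤ 1) (hy : ‖y‖ ≤ 1) : 0 ≤ 1 - ⟪x, y⟫ := by
  have := (real_inner_le_norm x y).trans (mul_le_one₀ hx (norm_nonneg y) hy)
  linarith

theorem norm_sub_le_sqrt_two_mul_sqrt_one_sub_real_inner (hx : ‖x‖ ≤ 1) (hy : ‖y‖ ≤ 1) :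
    ‖x - y‖ ≤ √2 * √(1 - ⟪x, y⟫) := by
  rw [← Real.sqrt_mul zero_le_two]
  refine Real.le_sqrt_of_sq_le ?_
  rw [norm_sub_sq_real]
  nlinarith [norm_nonneg x, norm_nonneg y]

theorem sqrt_one_sub_real_inner_le_add (hx : ‖x‖ ≤ 1) (hy : ‖y‖ ≤ 1) (hz : ‖z‖ ≤ 1) :
    √(1 - ⟪x, z⟫) ≤ √(1 - ⟪x, y⟫) + √(1 - ⟪y, z⟫) := by
  have hxy := one_sub_real_inner_nonneg hx hy
  have hyz := one_sub_real_inner_nonneg hy hz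
  have expand : 1 - ⟪x, z⟫ = (1 - ⟪x, y⟫) + (1 - ⟪y, z⟫) - (1 - ‖y‖ ^ 2) + ⟪x - y, y - z⟫ := by
    rw [inner_sub_left, inner_sub_right, inner_sub_right, real_inner_self_eq_norm_sq]
    ring
  have cross_le : ⟪x - y, y - z⟫ ≤ 2 * (√(1 - ⟪x, y⟫) * √(1 - ⟪y, z⟫)) :=
    calc ⟪x - y, y - z⟫
        ≤ ‖x - y‖ * ‖y - z‖ := real_inner_le_norm _ _
      _ ≤ (√2 * √(1 - ⟪x, y⟫)) * (√2 * √(1 - ⟪y, z⟫)) :=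
        mul_le_mul (norm_sub_le_sqrt_two_mul_sqrt_one_sub_real_inner hx hy)
          (norm_sub_le_sqrt_two_mul_sqrt_one_sub_real_inner hy hz) (norm_nonneg _)
          (by positivity)
      _ = 2 * (√(1 - ⟪x, y⟫) * √(1 - ⟪y, z⟫)) := by
        rw [mul_mul_mul_comm, Real.mul_self_sqrt zero_le_two]
  rw [Real.sqrt_le_left (by positivity), add_sq, Real.sq_sqrt hxy, Real.sq_sqrt hyz]
  linarith [pow_le_one₀ (norm_nonneg y) hy (n := 2)]

end InnerProductSpace

theorem pretentiousDist_triangle_general (f g h : ℕ → ℂ)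
    (hf : ∀ n, ‖f n‖ ≤ 1) (hg : ∀ n, ‖g n‖ ≤ 1) (hh : ∀ n, ‖h n‖ ≤ 1)
    (x : ℝ) :
    pretentiousDist f h x ≤ pretentiousDist f g x + pretentiousDist g h x := by
  simp only [pretentiousDist, ← Complex.inner]
  refine sqrt_sum_le_sqrt_sum_add_sqrt_sum _
    (fun p ↦ div_nonneg (one_sub_real_inner_nonneg (hg p) (hf p)) p.cast_nonneg)
    (fun p ↦ div_nonneg (one_sub_real_inner_nonneg (hh p) (hg p)) p.cast_nonneg) fun p _ ↦ ?_
  simp only [Real.sqrt_div' _ p.cast_nonneg, ← add_div]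
  gcongr
  exact (sqrt_one_sub_real_inner_le_add (hh p) (hg p) (hf p)).trans_eq (add_comm _ _)

/-- The pretentious distance satisfies the triangle inequality. -/
theorem pretentiousDist_triangle (f g h : ℕ → ℂ)
    (hf : ∀ n, ‖f n‖ ≤ 1) (hg : ∀ n, ‖g n‖ ≤ 1) (hh : ∀ n, ‖h n‖ ≤ 1)
    (x : ℝ) (hx : 2 ≤ x) :
    pretentiousDist f h x ≤ pretentiousDist f g x + pretentiousDist g h x :=
  pretentiousDist_triangle_general f g h hf hg hh x
end

section
/- Let f : ℕ → [-1,1] be completely multiplicative. For every n, at least one of the three products f(n)f(n+1), f(2n)f(2n+1), f(2n+1)f(2n+2) is nonnegative. -/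
/-- For a completely multiplicative `f : ℕ → [-1,1]`, for every `n` at least one of
`f(n)f(n+1)`, `f(2n)f(2n+1)`, `f(2n+1)f(2n+2)` is nonnegative. -/
theorem one_of_three_nonneg (f : ℕ → ℝ) (hbd : ∀ n, |f n| ≤ 1) (hf1 : f 1 = 1)
    (hmul : ∀ m n, f (m * n) = f m * f n) (n : ℕ) :
    0 ≤ f n * f (n + 1) ∨ 0 ≤ f (2 * n) * f (2 * n + 1) ∨
      0 ≤ f (2 * n + 1) * f (2 * n + 2) := by
  by_contra h
  push_neg at h
  obtain ⟨h1, h2, h3⟩ := h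
  have e1 : f (2 * n) = f 2 * f n := hmul 2 n
  have e2 : f (2 * n + 2) = f 2 * f (n + 1) := by
    have : 2 * n + 2 = 2 * (n + 1) := by ring
    rw [this, hmul]
  have key : (f n * f (n + 1)) * (f (2 * n) * f (2 * n + 1)) *
      (f (2 * n + 1) * f (2 * n + 2)) = (f 2 * f n * f (n + 1) * f (2 * n + 1)) ^ 2 := by
    rw [e1, e2]; ring
  have hp := mul_neg_of_pos_of_neg (mul_pos_of_neg_of_neg h1 h2) h3
  have hs := sq_nonneg (f 2 * f n * f (n + 1) * f (2 * n + 1))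
  linarith [key ▸ hp]
end

section
/- Let f : ℕ → [-1,1] be a function and h ≥ 2 an integer. Suppose that |∑_{n ≤ y} f(n)f(n+1)| ≤ (1-δ)y + C for all y ≥ 1, for some δ ∈ (0,1] and constant C, and that f is completely multiplicative. Then |∑_{n ≤ x} f(n)f(n+h)| ≤ (1 - 1/h)x + 1 + (1-δ)(x/h) + C for all x ≥ 1; in particular |∑_{n ≤ x} f(n)f(n+h)| ≤ (1 - δ/h)x + C + 1. -/
/-!
Split `∑_{n ≤ x} f(n) f(n+h)` according to whether `h ∣ n`. There are `x - ⌊x/h⌋ ≤ (1 - 1/h)x + 1`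
terms with `h ∤ n`, each of absolute value at most `1`. For `n = hm` complete multiplicativity
gives `f(hm) f(hm+h) = f(h)² f(m) f(m+1)`, so the remaining part is at most the shift-`1` sum up
to `x/h`, which the hypothesis bounds by `(1 - δ)(x/h) + C`.
-/

open Finset

theorem Nat.sum_Icc_filter_dvd {M : Type*} [AddCommMonoid M] (g : ℕ → M) {h : ℕ} (hh : 0 < h)
    (x : ℕ) : ∑ n ∈ Icc 1 x with h ∣ n, g n = ∑ m ∈ Icc 1 (x / h), g (h * m) := by
  symm
  refine sum_nbij' (h * ·) (· / h) ?_ ?_ ?_ ?_ (fun _ _ ↦ rfl)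
  · intro m hm
    simp only [mem_Icc] at hm
    simp only [mem_filter, mem_Icc, dvd_mul_right, and_true]
    exact ⟨by nlinarith, (Nat.mul_le_mul_left h hm.2).trans (Nat.mul_div_le x h)⟩
  · intro n hn
    simp only [mem_filter, mem_Icc] at hn
    obtain ⟨⟨hn1, hnx⟩, hdvd⟩ := hn
    exact mem_Icc.2 ⟨(Nat.one_le_div_iff hh).2 (Nat.le_of_dvd hn1 hdvd), Nat.div_le_div_right hnx⟩
  · intro m _
    exact Nat.mul_div_cancel_left m hh
  · intro n hn
    exact Nat.mul_div_cancel' (mem_filter.1 hn).2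

theorem Nat.card_Icc_filter_not_dvd (x h : ℕ) : #{n ∈ Icc 1 x | ¬ h ∣ n} = x - x / h := by
  have hdvd : #{n ∈ Icc 1 x | h ∣ n} = x / h := Nat.Ioc_filter_dvd_card_eq_div x h
  have := card_filter_add_card_filter_not (s := Icc 1 x) (h ∣ ·)
  rw [Nat.card_Icc] at this
  omega

theorem Nat.cast_sub_div_le (x h : ℕ) : (x : ℝ) - (x / h : ℕ) ≤ (1 - 1 / (h : ℝ)) * x + 1 := by
  have := Nat.floor_div_eq_div (K := ℝ) x h ▸ Nat.sub_one_lt_floor ((x : ℝ) / h)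
  rw [sub_mul, one_mul, one_div_mul_eq_div]
  linarith

theorem Finset.abs_sum_le_card_of_abs_le_one {ι : Type*} (s : Finset ι) (g : ι → ℝ)
    (hg : ∀ i ∈ s, |g i| ≤ 1) : |∑ i ∈ s, g i| ≤ #s := by
  simpa using (abs_sum_le_sum_abs g s).trans (sum_le_card_nsmul s _ 1 hg)

section CompletelyMultiplicative

variable {f : ℕ → ℝ}

theorem sum_filter_dvd_mul_shift_eq (hmul : ∀ m n, f (m * n) = f m * f n) {h : ℕ} (hh : 0 < h)
    (x : ℕ) : ∑ n ∈ Icc 1 x with h ∣ n, f n * f (n + h) =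
      f h ^ 2 * ∑ m ∈ Icc 1 (x / h), f m * f (m + 1) := by
  rw [Nat.sum_Icc_filter_dvd _ hh, mul_sum]
  refine sum_congr rfl fun m _ ↦ ?_
  rw [show h * m + h = h * (m + 1) by ring, hmul, hmul]
  ring

theorem abs_sum_filter_dvd_mul_shift_le (hbd : ∀ n, |f n| ≤ 1)
    (hmul : ∀ m n, f (m * n) = f m * f n) {h : ℕ} (hh : 0 < h) {δ C : ℝ} (hδ1 : δ ≤ 1)
    (hC : 0 ≤ C) (hyp : ∀ y : ℕ, 1 ≤ y → |∑ n ∈ Icc 1 y, f n * f (n + 1)| ≤ (1 - δ) * y + C)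
    (x : ℕ) : |∑ n ∈ Icc 1 x with h ∣ n, f n * f (n + h)| ≤ (1 - δ) * ((x : ℝ) / h) + C := by
  have hq : |∑ m ∈ Icc 1 (x / h), f m * f (m + 1)| ≤ (1 - δ) * (x / h : ℕ) + C := by
    rcases Nat.eq_zero_or_pos (x / h) with h0 | hpos
    · simpa [h0] using hC
    · exact hyp _ hpos
  have hfh : f h ^ 2 ≤ 1 := by
    simpa [sq_abs] using pow_le_one₀ (n := 2) (abs_nonneg (f h)) (hbd h)
  rw [sum_filter_dvd_mul_shift_eq hmul hh, abs_mul, abs_of_nonneg (sq_nonneg _)]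
  calc f h ^ 2 * |∑ m ∈ Icc 1 (x / h), f m * f (m + 1)|
      ≤ |∑ m ∈ Icc 1 (x / h), f m * f (m + 1)| := mul_le_of_le_one_left (abs_nonneg _) hfh
    _ ≤ (1 - δ) * (x / h : ℕ) + C := hq
    _ ≤ (1 - δ) * ((x : ℝ) / h) + C := by
      have : 0 ≤ 1 - δ := by linarith
      gcongr
      exact Nat.cast_div_le

end CompletelyMultiplicative

theorem shift_h_bound_general (f : ℕ → ℝ) (hbd : ∀ n, |f n| ≤ 1)
    (hmul : ∀ m n, f (m * n) = f m * f n)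
    (h : ℕ) (hh : 2 ≤ h) (δ C : ℝ) (hδ1 : δ ≤ 1) (hC : 0 ≤ C)
    (hyp : ∀ y : ℕ, 1 ≤ y →
      |∑ n ∈ Finset.Icc 1 y, f n * f (n + 1)| ≤ (1 - δ) * y + C) :
    ∀ x : ℕ, 1 ≤ x →
      |∑ n ∈ Finset.Icc 1 x, f n * f (n + h)| ≤
          (1 - 1 / (h : ℝ)) * x + 1 + (1 - δ) * ((x : ℝ) / h) + C ∧
      |∑ n ∈ Finset.Icc 1 x, f n * f (n + h)| ≤ (1 - δ / h) * x + C + 1 := by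
  intro x _
  have hmultiples := abs_sum_filter_dvd_mul_shift_le hbd hmul (h := h) (by omega) hδ1 hC hyp x
  have hrest : |∑ n ∈ Icc 1 x with ¬ h ∣ n, f n * f (n + h)| ≤ (1 - 1 / (h : ℝ)) * x + 1 := by
    refine (abs_sum_le_card_of_abs_le_one _ _ fun n _ ↦ ?_).trans ?_
    · rw [abs_mul]
      exact mul_le_one₀ (hbd n) (abs_nonneg _) (hbd (n + h))
    · rw [Nat.card_Icc_filter_not_dvd, Nat.cast_sub (Nat.div_le_self x h)]
      exact Nat.cast_sub_div_le x h
  have hsplit : |∑ n ∈ Icc 1 x, f n * f (n + h)| ≤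
      (1 - 1 / (h : ℝ)) * x + 1 + (1 - δ) * ((x : ℝ) / h) + C := by
    rw [← sum_filter_add_sum_filter_not _ (h ∣ ·)]
    linarith [abs_add_le (∑ n ∈ Icc 1 x with h ∣ n, f n * f (n + h))
      (∑ n ∈ Icc 1 x with ¬ h ∣ n, f n * f (n + h))]
  have hh0 : (h : ℝ) ≠ 0 := by positivity
  exact ⟨hsplit, hsplit.trans_eq (by field_simp; ring)⟩

/-- Deduction of cancellation at shift `h` from cancellation at shift `1`, for a
completely multiplicative `f : ℕ → [-1,1]`. -/
theorem shift_h_bound (f : ℕ → ℝ) (hbd : ∀ n, |f n| ≤ 1) (hf1 : f 1 = 1)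
    (hmul : ∀ m n, f (m * n) = f m * f n)
    (h : ℕ) (hh : 2 ≤ h) (δ C : ℝ) (hδ0 : 0 < δ) (hδ1 : δ ≤ 1) (hC : 0 ≤ C)
    (hyp : ∀ y : ℕ, 1 ≤ y →
      |∑ n ∈ Finset.Icc 1 y, f n * f (n + 1)| ≤ (1 - δ) * y + C) :
    ∀ x : ℕ, 1 ≤ x →
      |∑ n ∈ Finset.Icc 1 x, f n * f (n + h)| ≤
          (1 - 1 / (h : ℝ)) * x + 1 + (1 - δ) * ((x : ℝ) / h) + C ∧
      |∑ n ∈ Finset.Icc 1 x, f n * f (n + h)| ≤ (1 - δ / h) * x + C + 1 :=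
  shift_h_bound_general f hbd hmul h hh δ C hδ1 hC hyp
end

section
/- Let ξ, v ∈ (0, 1/2) and define η : ℝ → ℝ by η(x) = 1 for 1-v ≤ x ≤ 1+v, η(x) = (1+v+ξ-x)/ξ for 1+v ≤ x ≤ 1+v+ξ, η(x) = (x+v+ξ-1)/ξ for 1-v-ξ ≤ x ≤ 1-v, and η(x) = 0 otherwise. Then for every complex s with Re(s) = 1 one has the two bounds |∫₀^∞ t^{s-1} η(t) dt| ≤ 2(v + ξ) and |∫₀^∞ t^{s-1} η(t) dt| ≤ C/(ξ(1+|Im s|²)) for an absolute constant C. -/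
/-!
With `a = 1 - v - ξ`, `b = 1 - v`, `c = 1 + v`, `d = 1 + v + ξ`, the trapezoid is the second
difference of ramps `ξ η(t) = (t - a)⁺ - (t - b)⁺ - (t - c)⁺ + (t - d)⁺`. Integrating `t^(s-1)`
against a ramp is elementary, and since `a - b - c + d = 0` all boundary terms at `d` cancel,
leaving `∫ t^(s-1) η(t) dt = (a^(s+1) - b^(s+1) - c^(s+1) + d^(s+1)) / (ξ s (s+1))`.
For `Re s = 1` each `|x^(s+1)| = x² ≤ 4` and `|s (s+1)| ≥ |s|² = 1 + (Im s)²`, giving the second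
bound with `C = 16`; the first is the trivial bound `|t^(s-1) η(t)| ≤ 1` on `[a, d]`.
-/

open Complex MeasureTheory

/-- The trapezoidal approximation `η_{ξ,v}` to the indicator function of `[1-v, 1+v]`
with linear ramps of width `ξ`. -/
noncomputable def etaSmooth (ξ v : ℝ) (x : ℝ) : ℝ :=
  if 1 - v ≤ x ∧ x ≤ 1 + v then 1
  else if 1 + v ≤ x ∧ x ≤ 1 + v + ξ then (1 + v + ξ - x) / ξ
  else if 1 - v - ξ ≤ x ∧ x ≤ 1 - v then (x + v + ξ - 1) / ξ
  else 0

theorem integral_cpow_mul_sub {s : ℂ} (hs0 : s ≠ 0) (hs1 : s ≠ -1) {x y : ℝ} (hx : 0 < x)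
    (hxy : x ≤ y) :
    ∫ t in x..y, (t : ℂ) ^ (s - 1) * (t - x) =
      (y : ℂ) ^ (s + 1) / (s + 1) - x * (y : ℂ) ^ s / s + (x : ℂ) ^ (s + 1) / (s * (s + 1)) := by
  have hzero : (0 : ℝ) ∉ Set.uIcc x y := by
    rw [Set.uIcc_of_le hxy]
    exact fun h => hx.not_ge h.1
  have hexpand : Set.EqOn (fun t : ℝ => (t : ℂ) ^ (s - 1) * (t - x))
      (fun t : ℝ => (t : ℂ) ^ s - x * (t : ℂ) ^ (s - 1)) (Set.uIcc x y) := fun t ht => by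
    have ht : (t : ℂ) ≠ 0 := ofReal_ne_zero.2 (by rintro rfl; exact hzero ht)
    simp only [cpow_sub _ _ ht, cpow_one]
    field_simp
  have hs1' : s + 1 ≠ 0 := fun h => hs1 (eq_neg_of_add_eq_zero_left h)
  rw [intervalIntegral.integral_congr hexpand,
    intervalIntegral.integral_sub (intervalIntegral.intervalIntegrable_cpow (Or.inr hzero))
      ((intervalIntegral.intervalIntegrable_cpow (Or.inr hzero)).const_mul _),
    intervalIntegral.integral_const_mul, integral_cpow (Or.inr ⟨by simpa using hs1, hzero⟩),
    integral_cpow (Or.inr ⟨by simpa using hs0, hzero⟩), sub_add_cancel,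
    cpow_add _ _ (ofReal_ne_zero.2 hx.ne'), cpow_add _ _ (ofReal_ne_zero.2 (hx.trans_le hxy).ne'),
    cpow_one, cpow_one]
  field_simp
  ring

theorem intervalIntegrable_cpow_mul_posPart_sub (s : ℂ) {x a b : ℝ} (h : (0 : ℝ) ∉ Set.uIcc a b) :
    IntervalIntegrable (fun t : ℝ => (t : ℂ) ^ s * ((t - x)⁺ : ℝ)) volume a b :=
  (intervalIntegral.intervalIntegrable_cpow (Or.inr h)).mul_continuousOn (by fun_prop)

theorem integral_cpow_mul_posPart_sub {s : ℂ} (hs0 : s ≠ 0) (hs1 : s ≠ -1) {a x y : ℝ}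
    (ha : 0 < a) (hax : a ≤ x) (hxy : x ≤ y) :
    ∫ t in a..y, (t : ℂ) ^ (s - 1) * ((t - x)⁺ : ℝ) =
      (y : ℂ) ^ (s + 1) / (s + 1) - x * (y : ℂ) ^ s / s + (x : ℂ) ^ (s + 1) / (s * (s + 1)) := by
  have hzero : ∀ {b c}, a ≤ b → b ≤ c → (0 : ℝ) ∉ Set.uIcc b c := fun hb hbc h => by
    rw [Set.uIcc_of_le hbc] at h
    linarith [h.1]
  have hleft : ∫ t in a..x, (t : ℂ) ^ (s - 1) * ((t - x)⁺ : ℝ) = 0 := by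
    refine (intervalIntegral.integral_congr (g := 0) fun t ht => ?_).trans
      intervalIntegral.integral_zero
    rw [Set.uIcc_of_le hax] at ht
    simp [posPart_eq_zero.2 (sub_nonpos.2 ht.2)]
  have hright : ∫ t in x..y, (t : ℂ) ^ (s - 1) * ((t - x)⁺ : ℝ) =
      ∫ t in x..y, (t : ℂ) ^ (s - 1) * (t - x) := by
    refine intervalIntegral.integral_congr fun t ht => ?_
    rw [Set.uIcc_of_le hxy] at ht
    simp [posPart_eq_self.2 (sub_nonneg.2 ht.1)]
  rw [← intervalIntegral.integral_add_adjacent_intervals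
      (intervalIntegrable_cpow_mul_posPart_sub _ (hzero le_rfl hax))
      (intervalIntegrable_cpow_mul_posPart_sub _ (hzero hax hxy)),
    hleft, hright, zero_add, integral_cpow_mul_sub hs0 hs1 (ha.trans_le hax) hxy]

theorem integral_cpow_mul_trapezoid {s : ℂ} (hs0 : s ≠ 0) (hs1 : s ≠ -1) {a b c d : ℝ}
    (ha : 0 < a) (hab : a ≤ b) (hbc : b ≤ c) (hcd : c ≤ d) (hslopes : b - a = d - c) :
    ∫ t in a..d, (t : ℂ) ^ (s - 1) * (((t - a)⁺ - (t - b)⁺ - (t - c)⁺ + (t - d)⁺ : ℝ) : ℂ) =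
      ((a : ℂ) ^ (s + 1) - (b : ℂ) ^ (s + 1) - (c : ℂ) ^ (s + 1) + (d : ℂ) ^ (s + 1)) /
        (s * (s + 1)) := by
  have hzero : (0 : ℝ) ∉ Set.uIcc a d := by
    rw [Set.uIcc_of_le (by linarith)]
    exact fun h => ha.not_ge h.1
  have hint := fun x : ℝ => intervalIntegrable_cpow_mul_posPart_sub (s - 1) (x := x) hzero
  simp only [ofReal_add, ofReal_sub, mul_add, mul_sub]
  rw [intervalIntegral.integral_add (((hint a).sub (hint b)).sub (hint c)) (hint d),
    intervalIntegral.integral_sub ((hint a).sub (hint b)) (hint c),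
    intervalIntegral.integral_sub (hint a) (hint b),
    integral_cpow_mul_posPart_sub hs0 hs1 ha le_rfl (by linarith),
    integral_cpow_mul_posPart_sub hs0 hs1 ha hab (by linarith),
    integral_cpow_mul_posPart_sub hs0 hs1 ha (hab.trans hbc) hcd,
    integral_cpow_mul_posPart_sub hs0 hs1 ha (by linarith) le_rfl,
    cpow_add _ _ (ofReal_ne_zero.2 (by linarith : d ≠ 0)), cpow_one]
  have hs1' : s + 1 ≠ 0 := fun h => hs1 (eq_neg_of_add_eq_zero_left h)
  have hnodes : (a : ℂ) - b - c + d = 0 := by exact_mod_cast (by linarith : a - b - c + d = 0)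
  field_simp
  linear_combination (-(s + 1) * (d : ℂ) ^ s) * hnodes

theorem norm_ofReal_cpow_add_one_le {s : ℂ} (hs : s.re = 1) {x : ℝ} (hx : 0 < x) (hx2 : x ≤ 2) :
    ‖(x : ℂ) ^ (s + 1)‖ ≤ 4 := by
  rw [norm_cpow_eq_rpow_re_of_pos hx, add_re, hs, one_re, one_add_one_eq_two, Real.rpow_two]
  nlinarith

theorem one_add_sq_im_le_norm_mul_norm_add_one {s : ℂ} (hs : s.re = 1) :
    1 + s.im ^ 2 ≤ ‖s‖ * ‖s + 1‖ := by
  have hsq : ‖s‖ ^ 2 = 1 + s.im ^ 2 := by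
    rw [Complex.sq_norm, normSq_apply, hs]
    ring
  have hle : ‖s‖ ≤ ‖s + 1‖ := by
    rw [← sq_le_sq₀ (norm_nonneg _) (norm_nonneg _), hsq, Complex.sq_norm, normSq_apply]
    simp only [add_re, add_im, hs, one_re, one_im]
    nlinarith
  rw [← hsq, sq]
  exact mul_le_mul_of_nonneg_left hle (norm_nonneg _)

section etaSmooth

variable {ξ v : ℝ}

theorem etaSmooth_eq_posPart (hξ : 0 < ξ) (hv : 0 ≤ v) (t : ℝ) :
    etaSmooth ξ v t =
      ((t - (1 - v - ξ))⁺ - (t - (1 - v))⁺ - (t - (1 + v))⁺ + (t - (1 + v + ξ))⁺) / ξ := by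
  rw [eq_div_iff hξ.ne', etaSmooth]
  simp only [posPart_def, max_def]
  split_ifs <;> field_simp <;> grind

theorem etaSmooth_eq_zero (hξ : 0 < ξ) (hv : 0 ≤ v) {t : ℝ}
    (ht : t ∉ Set.Ioc (1 - v - ξ) (1 + v + ξ)) : etaSmooth ξ v t = 0 := by
  rw [Set.mem_Ioc] at ht
  rw [etaSmooth_eq_posPart hξ hv, div_eq_zero_iff]
  left
  simp only [posPart_def, max_def]
  split_ifs <;> grind

theorem etaSmooth_mem_Icc (hξ : 0 < ξ) (t : ℝ) : etaSmooth ξ v t ∈ Set.Icc 0 1 := by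
  unfold etaSmooth
  split_ifs
  · simp
  · exact ⟨div_nonneg (by linarith) hξ.le, (div_le_one hξ).2 (by linarith)⟩
  · exact ⟨div_nonneg (by linarith) hξ.le, (div_le_one hξ).2 (by linarith)⟩
  · simp

theorem norm_cpow_mul_etaSmooth_le_one (hξ : 0 < ξ) {s : ℂ} (hs : s.re = 1) {t : ℝ} (ht : 0 < t) :
    ‖(t : ℂ) ^ (s - 1) * (etaSmooth ξ v t : ℂ)‖ ≤ 1 := by
  obtain ⟨h₀, h₁⟩ := etaSmooth_mem_Icc (v := v) hξ t
  rw [norm_mul, norm_cpow_eq_rpow_re_of_pos ht, sub_re, hs, one_re, sub_self, Real.rpow_zero,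
    one_mul, norm_real, Real.norm_of_nonneg h₀]
  exact h₁

theorem setIntegral_Ioi_cpow_mul_etaSmooth (s : ℂ) (hξ : 0 < ξ) (hv : 0 ≤ v)
    (ha : 0 ≤ 1 - v - ξ) :
    ∫ t in Set.Ioi (0 : ℝ), (t : ℂ) ^ (s - 1) * (etaSmooth ξ v t : ℂ) =
      ∫ t in (1 - v - ξ)..(1 + v + ξ), (t : ℂ) ^ (s - 1) * (etaSmooth ξ v t : ℂ) := by
  rw [intervalIntegral.integral_of_le (by linarith)]
  refine setIntegral_eq_of_subset_of_forall_sdiff_eq_zero measurableSet_Ioi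
    (fun t ht => ha.trans_lt ht.1) fun t ht => ?_
  rw [etaSmooth_eq_zero hξ hv ht.2, ofReal_zero, mul_zero]

theorem integral_cpow_mul_etaSmooth {s : ℂ} (hs0 : s ≠ 0) (hs1 : s ≠ -1) (hξ : 0 < ξ) (hv : 0 ≤ v)
    (ha : 0 < 1 - v - ξ) :
    ∫ t in (1 - v - ξ)..(1 + v + ξ), (t : ℂ) ^ (s - 1) * (etaSmooth ξ v t : ℂ) =
      (((1 - v - ξ : ℝ) : ℂ) ^ (s + 1) - ((1 - v : ℝ) : ℂ) ^ (s + 1) - ((1 + v : ℝ) : ℂ) ^ (s + 1)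
        + ((1 + v + ξ : ℝ) : ℂ) ^ (s + 1)) / (ξ * s * (s + 1)) := by
  simp_rw [etaSmooth_eq_posPart hξ hv, ofReal_div, mul_div_assoc', div_eq_inv_mul _ (ξ : ℂ)]
  rw [intervalIntegral.integral_const_mul, integral_cpow_mul_trapezoid hs0 hs1 ha (by linarith)
      (by linarith) (by linarith) (by ring),
    inv_mul_eq_div, div_div, mul_comm _ (ξ : ℂ), ← mul_assoc]

end etaSmooth

/-- For `Re s = 1`, the Mellin-type integral `∫₀^∞ t^{s-1} η_{ξ,v}(t) dt` satisfies
both `|·| ≤ 2(v+ξ)` and `|·| ≤ C/(ξ(1+|Im s|²))` for an absolute constant `C`. -/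
theorem etaSmooth_mellin_bounds :
    ∃ C > 0, ∀ ξ v : ℝ, 0 < ξ → ξ < 1 / 2 → 0 < v → v < 1 / 2 →
      ∀ s : ℂ, s.re = 1 →
        ‖∫ t in Set.Ioi (0 : ℝ), (t : ℂ) ^ (s - 1) * (etaSmooth ξ v t : ℂ)‖ ≤ 2 * (v + ξ) ∧
        ‖∫ t in Set.Ioi (0 : ℝ), (t : ℂ) ^ (s - 1) * (etaSmooth ξ v t : ℂ)‖ ≤
          C / (ξ * (1 + |s.im| ^ 2)) := by
  refine ⟨16, by norm_num, fun ξ v hξ hξ2 hv hv2 s hs => ?_⟩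
  have hs0 : s ≠ 0 := by rintro rfl; simp at hs
  have hs1 : s ≠ -1 := by rintro rfl; norm_num at hs
  have ha : 0 < 1 - v - ξ := by linarith
  rw [setIntegral_Ioi_cpow_mul_etaSmooth s hξ hv.le ha.le]
  constructor
  · have hpos : ∀ t ∈ Set.uIoc (1 - v - ξ) (1 + v + ξ), 0 < t := fun t ht => by
      rw [Set.uIoc_of_le (by linarith)] at ht
      exact ha.trans ht.1
    calc _ ≤ 1 * |1 + v + ξ - (1 - v - ξ)| :=
          intervalIntegral.norm_integral_le_of_norm_le_const fun t ht =>
            norm_cpow_mul_etaSmooth_le_one hξ hs (hpos t ht)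
      _ = 2 * (v + ξ) := by rw [one_mul, abs_of_nonneg (by linarith)]; ring
  · rw [integral_cpow_mul_etaSmooth hs0 hs1 hξ hv.le ha, norm_div]
    refine div_le_div₀ (by norm_num) ?_ (by positivity) ?_
    · grw [norm_add_le, norm_sub_le, norm_sub_le]
      have h4 := fun x (hx : 0 < x) (hx2 : x ≤ 2) => norm_ofReal_cpow_add_one_le hs hx hx2
      linarith [h4 _ ha (by linarith), h4 (1 - v) (by linarith) (by linarith),
        h4 (1 + v) (by linarith) (by linarith), h4 (1 + v + ξ) (by linarith) (by linarith)]
    · rw [norm_mul, norm_mul, norm_real, Real.norm_of_nonneg hξ.le, sq_abs, mul_assoc]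
      exact mul_le_mul_of_nonneg_left (one_add_sq_im_le_norm_mul_norm_add_one hs) hξ.le
end

section
/- Let g : ℕ → ℝ≥0 be the multiplicative function with g(p^k) = k+1 if the prime p lies in [Y, 2Y] and g(p^k) = 1 otherwise, where Y ≥ 2. Then for every N ≥ 2, ∑_{n ≤ N} g(n)²/n² = O(1), with an absolute implied constant independent of Y and N. -/
/-!
Since `|g (p ^ k)| ≤ k + 1 = τ (p ^ k)` on prime powers (`τ = σ 0`), `|g| ≤ τ`. The divisor
function is submultiplicative, so every term of `(τ * τ) n = ∑_{ab = n} τ a τ b` is at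
least `τ n`, whence `τ n ^ 2 ≤ (τ * τ) n = (ζ * ζ * ζ * ζ) n`. Division by `n ^ 2` is completely
multiplicative, hence commutes with Dirichlet convolution, and the hyperbola `ab ≤ N` lies in the
square `[1, N]²`; so the partial sums of `(f * h) n / n ^ 2` are at most the product of those of
`f` and `h`. This bounds the sum by `(∑ 1 / n ^ 2) ^ 4 ≤ 2 ^ 4`, independently of `Y`.
-/

open Finset ArithmeticFunction
open scoped ArithmeticFunction.zeta ArithmeticFunction.sigma

theorem Nat.multiplicative_le_of_prime_pow_le {R : Type*} [CommSemiring R] [PartialOrder R]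
    [IsOrderedRing R] {f h : ℕ → R} (hf : ∀ m n, m.Coprime n → f (m * n) = f m * f n)
    (hf1 : f 1 = 1) (hh : ∀ m n, m.Coprime n → h (m * n) = h m * h n) (hh1 : h 1 = 1)
    (hle : ∀ p k, p.Prime → 0 < k → 0 ≤ f (p ^ k) ∧ f (p ^ k) ≤ h (p ^ k))
    {n : ℕ} (hn : n ≠ 0) : f n ≤ h n := by
  have hfactor : ∀ p ∈ n.factorization.support,
      0 ≤ f (p ^ n.factorization p) ∧ f (p ^ n.factorization p) ≤ h (p ^ n.factorization p) :=
    fun p hp => hle p _ (Nat.prime_of_mem_primeFactors (Nat.support_factorization n ▸ hp))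
      (Finsupp.mem_support_iff.mp hp).bot_lt
  rw [Nat.multiplicative_factorization f hf hf1 hn, Nat.multiplicative_factorization h hh hh1 hn]
  exact prod_le_prod (fun p hp => (hfactor p hp).1) (fun p hp => (hfactor p hp).2)

namespace ArithmeticFunction

theorem sigma_zero_mul_le (m n : ℕ) : σ 0 (m * n) ≤ σ 0 m * σ 0 n := by
  simp only [sigma_zero_apply, Nat.divisors_mul]
  exact card_mul_le

theorem sq_sigma_zero_le (n : ℕ) : σ 0 n ^ 2 ≤ (σ 0 * σ 0) n := by
  have hcard : #n.divisorsAntidiagonal = σ 0 n := by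
    rw [← Nat.map_div_right_divisors, card_map, sigma_zero_apply]
  rw [mul_apply, sq, ← hcard, ← smul_eq_mul, ← sum_const, hcard]
  refine sum_le_sum fun x hx => ?_
  rw [← (Nat.mem_divisorsAntidiagonal.mp hx).1]
  exact sigma_zero_mul_le _ _

theorem pdiv_mul_of_map_mul {R : Type*} [Semifield R] (f g P : ArithmeticFunction R)
    (hP : ∀ a b, P (a * b) = P a * P b) : pdiv (f * g) P = pdiv f P * pdiv g P := by
  ext n
  rw [pdiv_apply, mul_apply, mul_apply, sum_div]
  refine sum_congr rfl fun x hx => ?_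
  rw [← (Nat.mem_divisorsAntidiagonal.mp hx).1, hP, pdiv_apply, pdiv_apply, div_mul_div_comm]

theorem sum_Ioc_mul_le {R : Type*} [CommSemiring R] [PartialOrder R] [IsOrderedRing R]
    {f g : ArithmeticFunction R} (hf : ∀ n, 0 ≤ f n) (hg : ∀ n, 0 ≤ g n) (N : ℕ) :
    ∑ n ∈ Ioc 0 N, (f * g) n ≤ (∑ n ∈ Ioc 0 N, f n) * ∑ n ∈ Ioc 0 N, g n := by
  rw [sum_Ioc_mul_eq_sum_prod_filter, sum_mul_sum, ← sum_product']
  exact sum_le_sum_of_subset_of_nonneg (filter_subset _ _)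
    fun x _ _ => mul_nonneg (hf _) (hg _)

theorem natCoe_pow_apply_mul {R : Type*} [Semiring R] (s a b : ℕ) :
    (pow s : ArithmeticFunction R) (a * b) = (pow s : ArithmeticFunction R) a * (pow s) b := by
  simp only [natCoe_apply, pow_apply, mul_eq_zero]
  split_ifs <;> simp_all [mul_pow]

theorem natCoe_apply_div_pow_eq_pdiv (f : ArithmeticFunction ℕ) (s n : ℕ) :
    (f n : ℝ) / (n : ℝ) ^ s = pdiv (f : ArithmeticFunction ℝ) (pow s) n := by
  rcases eq_or_ne n 0 with rfl | hn
  · simp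
  · simp [pdiv_apply, natCoe_apply, pow_apply, hn]

theorem sum_Ioc_mul_div_pow_le (f g : ArithmeticFunction ℕ) (s N : ℕ) :
    ∑ n ∈ Ioc 0 N, ((f * g) n : ℝ) / (n : ℝ) ^ s ≤
      (∑ n ∈ Ioc 0 N, (f n : ℝ) / (n : ℝ) ^ s) * ∑ n ∈ Ioc 0 N, (g n : ℝ) / (n : ℝ) ^ s := by
  simp only [natCoe_apply_div_pow_eq_pdiv, natCoe_mul,
    pdiv_mul_of_map_mul _ _ _ (natCoe_pow_apply_mul s)]
  refine sum_Ioc_mul_le (fun n => ?_) (fun n => ?_) N <;>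
    rw [← natCoe_apply_div_pow_eq_pdiv] <;> positivity

theorem sum_Ioc_zeta_div_sq_le (N : ℕ) : ∑ n ∈ Ioc 0 N, (ζ n : ℝ) / (n : ℝ) ^ 2 ≤ 2 := by
  have hIoo : Ioo 0 (N + 1) = Ioc 0 N := by ext; simp
  calc ∑ n ∈ Ioc 0 N, (ζ n : ℝ) / (n : ℝ) ^ 2 = ∑ n ∈ Ioo 0 (N + 1), ((n : ℝ) ^ 2)⁻¹ := by
        rw [hIoo]
        refine sum_congr rfl fun n hn => ?_
        simp [zeta_apply, (mem_Ioc.mp hn).1.ne']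
    _ ≤ 2 := by simpa using sum_Ioo_inv_sq_le (α := ℝ) 0 (N + 1)

theorem sum_Ioc_sigma_zero_div_sq_le (N : ℕ) :
    ∑ n ∈ Ioc 0 N, (σ 0 n : ℝ) / (n : ℝ) ^ 2 ≤ 4 := by
  rw [← zeta_mul_pow_eq_sigma, pow_zero_eq_zeta]
  calc _ ≤ _ := sum_Ioc_mul_div_pow_le ζ ζ 2 N
    _ ≤ 2 * 2 := by gcongr <;> exact sum_Ioc_zeta_div_sq_le N
    _ = 4 := by norm_num

theorem sum_Ioc_sigma_zero_mul_sigma_zero_div_sq_le (N : ℕ) :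
    ∑ n ∈ Ioc 0 N, ((σ 0 * σ 0) n : ℝ) / (n : ℝ) ^ 2 ≤ 16 :=
  calc _ ≤ _ := sum_Ioc_mul_div_pow_le (σ 0) (σ 0) 2 N
    _ ≤ 4 * 4 := by gcongr <;> exact sum_Ioc_sigma_zero_div_sq_le N
    _ = 16 := by norm_num

theorem abs_le_sigma_zero {g : ℕ → ℝ} (hg1 : g 1 = 1)
    (hmul : ∀ m n, m.Coprime n → g (m * n) = g m * g n)
    (hpow : ∀ p k : ℕ, p.Prime → 0 < k → |g (p ^ k)| ≤ k + 1) {n : ℕ} (hn : n ≠ 0) :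
    |g n| ≤ σ 0 n :=
  Nat.multiplicative_le_of_prime_pow_le (f := fun n => |g n|) (h := fun n => (σ 0 n : ℝ))
    (fun m n hmn => by simp only [hmul m n hmn, abs_mul]) (by simp [hg1])
    (fun m n hmn => by simp only [isMultiplicative_sigma.map_mul_of_coprime hmn, Nat.cast_mul])
    (by simp)
    (fun p k hp hk => ⟨abs_nonneg _, by simpa [sigma_zero_apply_prime_pow hp] using hpow p k hp hk⟩)
    hn

end ArithmeticFunction

/-- Let `g` be the multiplicative function with `g(p^k) = k+1` for primes
`p ∈ [Y, 2Y]` and `g(p^k) = 1` otherwise. Then `∑_{n ≤ N} g(n)²/n² = O(1)`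
uniformly in `Y` and `N`. -/
theorem shiu_type_bound :
    ∃ C > 0, ∀ Y : ℕ, 2 ≤ Y → ∀ g : ℕ → ℝ,
      g 1 = 1 →
      (∀ m n : ℕ, Nat.Coprime m n → g (m * n) = g m * g n) →
      (∀ p k : ℕ, p.Prime → 1 ≤ k →
        g (p ^ k) = if Y ≤ p ∧ p ≤ 2 * Y then (k : ℝ) + 1 else 1) →
      ∀ N : ℕ, 2 ≤ N →
        ∑ n ∈ Finset.Icc 1 N, (g n) ^ 2 / (n : ℝ) ^ 2 ≤ C := by
  refine ⟨16, by norm_num, fun Y _ g hg1 hmul hpp N _ => ?_⟩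
  have hpow : ∀ p k : ℕ, p.Prime → 0 < k → |g (p ^ k)| ≤ k + 1 := by
    intro p k hp hk
    rw [hpp p k hp hk]
    split_ifs
    · rw [abs_of_nonneg (by positivity)]
    · simp
  have hsq (n : ℕ) (hn : n ∈ Ioc 0 N) : g n ^ 2 ≤ ((σ 0 * σ 0) n : ℝ) := calc
    g n ^ 2 = |g n| ^ 2 := (sq_abs _).symm
    _ ≤ (σ 0 n : ℝ) ^ 2 := by gcongr; exact abs_le_sigma_zero hg1 hmul hpow (mem_Ioc.mp hn).1.ne'
    _ ≤ _ := by exact_mod_cast sq_sigma_zero_le n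
  calc ∑ n ∈ Icc 1 N, g n ^ 2 / (n : ℝ) ^ 2
      ≤ ∑ n ∈ Ioc 0 N, ((σ 0 * σ 0) n : ℝ) / (n : ℝ) ^ 2 := by
        rw [← Icc_add_one_left_eq_Ioc, zero_add]
        gcongr with n hn
        exact hsq n hn
    _ ≤ 16 := sum_Ioc_sigma_zero_mul_sigma_zero_div_sq_le N
end
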